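/- arXiv:0906.4003 — 2 statements merged into one kernel-verified Lean document; each statement's English description precedes it below -/
import Mathlib

section
/- Let s ⊆ ℝ. Then every sequence X : ℕ → ℝ taking values in s contains arbitrarily long locally heavy factors (for every L there exist j and n ≥ L such that the word X(j) … X(j+n-1) is locally heavy) if and only if s is well-ordered by ≥ (contains no infinite strictly increasing sequence). -/
/-!
A strictly increasing word of length at least two is not locally heavy, since its first letter
lies below its average; so a strictly increasing sequence in `s` has no long locally heavy factor.

Conversely, suppose `X` has no locally heavy factor of length `≥ L`, and factor `X` greedily into
the longest locally heavy factors. If one factor were on average at least as heavy as the next,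
their concatenation would be a longer locally heavy factor; so the averages of the factors
increase strictly. As the factors have length `< L`, Dickson's lemma yields two of them of the
same length, the later one letterwise below the earlier one, which contradicts the increase.
-/

open Finset

section Averages

variable {𝕜 : Type*} [Field 𝕜]

/-- The word `w 0 … w (n - 1)` is encoded by the pair `(w, n)`. -/
def avgWeight (w : ℕ → 𝕜) (n : ℕ) : 𝕜 :=
  (∑ k ∈ range n, w k) / n

theorem avgWeight_add (w : ℕ → 𝕜) (n m : ℕ) :
    avgWeight w (n + m) = (∑ k ∈ range n, w k + ∑ k ∈ range m, w (n + k)) / (n + m) := by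
  rw [avgWeight, sum_range_add, Nat.cast_add]

variable [LinearOrder 𝕜]

def IsLocallyHeavy (w : ℕ → 𝕜) (n : ℕ) : Prop :=
  ∀ i, 1 ≤ i → i ≤ n → avgWeight w n ≤ avgWeight w i

theorem isLocallyHeavy_zero (w : ℕ → 𝕜) : IsLocallyHeavy w 0 :=
  fun _ h1 h0 => absurd (h1.trans h0) (by norm_num)

theorem isLocallyHeavy_one (w : ℕ → 𝕜) : IsLocallyHeavy w 1 := by
  intro i h1 h2
  rw [le_antisymm h2 h1]

variable [IsStrictOrderedRing 𝕜]

theorem add_div_add_le_div_of_div_le {a b n m : 𝕜} (hn : 0 < n) (hm : 0 < m)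
    (h : b / m ≤ a / n) : (a + b) / (n + m) ≤ a / n := by
  rw [div_le_div_iff₀ hm hn] at h
  rw [div_le_div_iff₀ (by positivity) hn]
  nlinarith

theorem add_div_add_le_add_div_add {a b c n m t : 𝕜} (hn : 0 < n) (hm : 0 < m) (ht : 0 < t)
    (htm : t ≤ m) (hba : b / m ≤ a / n) (hbc : b / m ≤ c / t) :
    (a + b) / (n + m) ≤ (a + c) / (n + t) := by
  rw [div_le_div_iff₀ hm hn] at hba
  rw [div_le_div_iff₀ hm ht] at hbc
  rw [div_le_div_iff₀ (by positivity) (by positivity)]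
  -- `(a + c) (n + m) - (a + b) (n + t) ≥ (m - t) (a m - b n) / m`
  nlinarith [mul_nonneg (sub_nonneg.2 htm) (sub_nonneg.2 hba),
    mul_nonneg hn.le (sub_nonneg.2 hbc), mul_nonneg hm.le (sub_nonneg.2 hbc)]

variable {w : ℕ → 𝕜} {n m : ℕ}

theorem not_isLocallyHeavy_of_strictMono (hw : StrictMono w) (hn : 2 ≤ n) :
    ¬IsLocallyHeavy w n := by
  intro hheavy
  have hfirst : avgWeight w n ≤ w 0 := by simpa [avgWeight] using hheavy 1 le_rfl (by omega)
  have hsum : ∑ _k ∈ range n, w 0 < ∑ k ∈ range n, w k :=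
    sum_lt_sum (fun k _ => hw.monotone k.zero_le) ⟨1, mem_range.2 hn, hw one_pos⟩
  rw [avgWeight, div_le_iff₀ (by positivity)] at hfirst
  simp only [sum_const, card_range, nsmul_eq_mul] at hsum
  linarith

theorem IsLocallyHeavy.append (hn : 0 < n) (hm : 0 < m) (hw : IsLocallyHeavy w n)
    (hv : IsLocallyHeavy (fun k => w (n + k)) m)
    (hle : avgWeight (fun k => w (n + k)) m ≤ avgWeight w n) :
    IsLocallyHeavy w (n + m) := by
  have hn' : (0 : 𝕜) < n := by exact_mod_cast hn
  have hm' : (0 : 𝕜) < m := by exact_mod_cast hm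
  intro i hi hinm
  rw [avgWeight_add]
  rcases le_or_gt i n with hin | hni
  · exact (add_div_add_le_div_of_div_le hn' hm' hle).trans (hw i hi hin)
  · obtain ⟨t, rfl⟩ := Nat.exists_eq_add_of_le hni.le
    rw [avgWeight_add]
    exact add_div_add_le_add_div_add hn' hm' (by exact_mod_cast (by omega : 0 < t))
      (by exact_mod_cast (by omega : t ≤ m)) hle (hv t (by omega) (by omega))

end Averages

section MaxHeavy

open Classical

variable {𝕜 : Type*} [Field 𝕜] [LinearOrder 𝕜] {X : ℕ → 𝕜} {L j n : ℕ}

noncomputable def maxHeavyLength (X : ℕ → 𝕜) (L j : ℕ) : ℕ :=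
  Nat.findGreatest (fun n => IsLocallyHeavy (fun k => X (j + k)) n) L

theorem maxHeavyLength_le : maxHeavyLength X L j ≤ L :=
  Nat.findGreatest_le L

theorem isLocallyHeavy_maxHeavyLength :
    IsLocallyHeavy (fun k => X (j + k)) (maxHeavyLength X L j) :=
  Nat.findGreatest_spec L.zero_le (isLocallyHeavy_zero _)

theorem le_maxHeavyLength (hn : n ≤ L) (h : IsLocallyHeavy (fun k => X (j + k)) n) :
    n ≤ maxHeavyLength X L j :=
  Nat.le_findGreatest hn h

theorem one_le_maxHeavyLength (hL : 1 ≤ L) : 1 ≤ maxHeavyLength X L j :=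
  le_maxHeavyLength hL (isLocallyHeavy_one _)

end MaxHeavy

def greedyCut (ℓ : ℕ → ℕ) : ℕ → ℕ
  | 0 => 0
  | k + 1 => greedyCut ℓ k + ℓ (greedyCut ℓ k)

section Greedy

variable {𝕜 : Type*} [Field 𝕜] [LinearOrder 𝕜] [IsStrictOrderedRing 𝕜] {X : ℕ → 𝕜} {L : ℕ}

theorem strictMono_avgWeight_greedyCut
    (hL : ∀ j n, 0 < n → IsLocallyHeavy (fun k => X (j + k)) n → n < L) :
    StrictMono fun k => avgWeight (fun i => X (greedyCut (maxHeavyLength X L) k + i))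
      (maxHeavyLength X L (greedyCut (maxHeavyLength X L) k)) := by
  set ℓ := maxHeavyLength X L
  set J := greedyCut ℓ
  have hL1 : 1 ≤ L := (hL 0 1 one_pos (isLocallyHeavy_one _)).le
  refine strictMono_nat_of_lt_succ fun k => lt_of_not_ge fun hle => ?_
  have hpos : 1 ≤ ℓ (J (k + 1)) := one_le_maxHeavyLength hL1
  have hnext : (fun i => X (J (k + 1) + i)) = fun i => X (J k + (ℓ (J k) + i)) := by
    funext i
    simp only [J, greedyCut, add_assoc]
  have hlong : IsLocallyHeavy (fun i => X (J k + i)) (ℓ (J k) + ℓ (J (k + 1))) := by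
    refine (isLocallyHeavy_maxHeavyLength).append (one_le_maxHeavyLength hL1)
      (one_le_maxHeavyLength hL1) ?_ ?_
    · rw [← hnext]
      exact isLocallyHeavy_maxHeavyLength
    · rw [← hnext]
      exact hle
  have hmax : ℓ (J k) + ℓ (J (k + 1)) ≤ ℓ (J k) :=
    le_maxHeavyLength (hL _ _ (by omega) hlong).le hlong
  omega

end Greedy

theorem Set.partiallyWellOrderedOn_ge_of_not_exists_strictMono {α : Type*} [LinearOrder α]
    {s : Set α} (hs : ¬∃ u : ℕ → α, (∀ i, u i ∈ s) ∧ StrictMono u) :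
    s.PartiallyWellOrderedOn (· ≥ ·) := by
  refine partiallyWellOrderedOn_iff_exists_lt.2 fun u hu => ?_
  by_contra! h
  exact hs ⟨u, hu, fun a b hab => h a b hab⟩

/-- By Dickson's lemma, two of the words agree in length and are letterwise comparable. -/
theorem Set.PartiallyWellOrderedOn.not_strictMono_avgWeight {𝕜 : Type*} [Field 𝕜]
    [LinearOrder 𝕜] [IsStrictOrderedRing 𝕜] {s : Set 𝕜} (hs : s.PartiallyWellOrderedOn (· ≥ ·))
    {L : ℕ} (w : ℕ → ℕ → 𝕜) (hw : ∀ k i, w k i ∈ s) (n : ℕ → ℕ) (hn : ∀ k, n k ≤ L) :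
    ¬StrictMono fun k => avgWeight (w k) (n k) := by
  intro hmono
  obtain ⟨a, b, hab, hle, hnab⟩ := ((PartiallyWellOrderedOn.pi fun _ : Fin L => hs).prod
    ((finite_Iic L).partiallyWellOrderedOn (r := Eq))).exists_lt
    (f := fun k => (fun i : Fin L => w k i, n k)) fun k => ⟨by simp [hw], hn k⟩
  refine (hmono hab).not_ge ?_
  simp only [avgWeight] at hle hnab ⊢
  rw [← hnab]
  gcongr with i hi
  exact hle ⟨i, (Finset.mem_range.1 hi).trans_le (hn a)⟩

/-- Every sequence with values in `s ⊆ ℝ` contains arbitrarily long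
locally heavy factors iff `s` is well-ordered by `≥` (has no infinite strictly increasing
sequence). -/
theorem arbitrarily_long_locally_heavy_iff_well_ordered (s : Set ℝ) :
    (∀ X : ℕ → ℝ, (∀ i, X i ∈ s) → ∀ L : ℕ, ∃ j n : ℕ, L ≤ n ∧ 1 ≤ n ∧
        ∀ i : ℕ, 1 ≤ i → i ≤ n →
          (∑ k ∈ Finset.range n, X (j + k)) / n ≤ (∑ k ∈ Finset.range i, X (j + k)) / i)
      ↔ ¬ ∃ u : ℕ → ℝ, (∀ i, u i ∈ s) ∧ StrictMono u := by
  constructor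
  · rintro h ⟨u, hu, hmono⟩
    obtain ⟨j, n, h2n, -, hheavy⟩ := h u hu 2
    exact not_isLocallyHeavy_of_strictMono (hmono.comp (strictMono_id.const_add j)) h2n hheavy
  · intro hs X hX L
    by_contra hshort
    have hL : ∀ j n, 0 < n → IsLocallyHeavy (fun k => X (j + k)) n → n < L :=
      fun j n hn hheavy => not_le.1 fun hLn => hshort ⟨j, n, hLn, hn, hheavy⟩
    exact (Set.partiallyWellOrderedOn_ge_of_not_exists_strictMono hs).not_strictMono_avgWeight
      _ (fun _ _ => hX _) _ (fun _ => maxHeavyLength_le) (strictMono_avgWeight_greedyCut hL)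
end

section
/- Let (Ω, μ) be a probability space, T : Ω → Ω a measurable map preserving μ, and Γ ⊆ Ω a measurable set whose measure α = μ(Γ) is a rational number. Suppose that for μ-almost every ω ∈ Ω and every n ∈ ℕ, |S_n(ω) − nα| ≤ 1, where S_n(ω) = ∑_{i=0}^{n-1} χ_Γ(T^i ω). Then the heavy set {ω : ∀ n ≥ 0, S_n(ω) ≥ nα} has positive μ-measure. -/
/-!
If the heavy set were null, almost every orbit would reach a negative Birkhoff sum of
`f = χ_Γ - α`; as `α` is rational with denominator `d`, these sums lie in `d⁻¹ ℤ`, so they would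
even reach `-1/d`. The running minimum `g = inf_n S_n f` is bounded, and `g ∘ T ≥ g - f` with
both sides of the same integral, so `g ∘ T = g - f` a.e., i.e. `g ∘ T^[n] = g - S_n f` along
almost every orbit. Since `g ≤ -1/d` on the whole orbit, `S_n f ≥ g + 1/d` for all `n`,
contradicting `g = inf_n S_n f`.
-/

open MeasureTheory Filter Set

section Deterministic

variable {α G : Type*} {T : α → α} {f : α → ℝ} {x : α}

-- `⨅` over a set of reals that is unbounded below is the junk value `0`, hence the `BddBelow`
-- hypotheses below.
noncomputable def birkhoffInf (T : α → α) (f : α → ℝ) (x : α) : ℝ :=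
  ⨅ n, birkhoffSum T f n x

theorem birkhoffInf_le (hx : BddBelow (range fun n ↦ birkhoffSum T f n x)) (n : ℕ) :
    birkhoffInf T f x ≤ birkhoffSum T f n x :=
  ciInf_le hx n

theorem birkhoffInf_nonpos (hx : BddBelow (range fun n ↦ birkhoffSum T f n x)) :
    birkhoffInf T f x ≤ 0 := by
  simpa using birkhoffInf_le hx 0

theorem le_birkhoffInf {C : ℝ} (hx : ∀ n, C ≤ birkhoffSum T f n x) : C ≤ birkhoffInf T f x :=
  le_ciInf hx

theorem birkhoffInf_sub_le_birkhoffInf_apply (hx : BddBelow (range fun n ↦ birkhoffSum T f n x)) :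
    birkhoffInf T f x - f x ≤ birkhoffInf T f (T x) :=
  le_birkhoffInf fun n ↦ by linarith [birkhoffInf_le hx (n + 1), birkhoffSum_succ' T f n x]

theorem apply_iterate_eq_sub_birkhoffSum [AddCommGroup G] {g : α → G} {φ : α → G}
    (h : ∀ k, φ (T (T^[k] x)) = φ (T^[k] x) - g (T^[k] x)) (n : ℕ) :
    φ (T^[n] x) = φ x - birkhoffSum T g n x := by
  induction n with
  | zero => simp
  | succ n ih =>
    rw [Function.iterate_succ_apply', h, ih, birkhoffSum_succ]
    abel

end Deterministic

section MeasurePreserving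

variable {Ω M : Type*} [MeasurableSpace Ω] {μ : Measure Ω} {T : Ω → Ω} {f : Ω → ℝ} {C : ℝ}

theorem Measurable.birkhoffSum [AddCommMonoid M] [MeasurableSpace M] [MeasurableAdd₂ M]
    {g : Ω → M} (hg : Measurable g) (hT : Measurable T) (n : ℕ) :
    Measurable (birkhoffSum T g n) :=
  Finset.measurable_sum _ fun k _ ↦ hg.comp (hT.iterate k)

theorem Measurable.birkhoffInf (hf : Measurable f) (hT : Measurable T) :
    Measurable (birkhoffInf T f) :=
  .iInf fun n ↦ hf.birkhoffSum hT n

theorem integrable_birkhoffInf [IsFiniteMeasure μ] (hT : Measurable T) (hf : Measurable f)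
    (hC : ∀ᵐ x ∂μ, ∀ n, -C ≤ birkhoffSum T f n x) :
    Integrable (birkhoffInf T f) μ := by
  refine (integrable_const C).mono' (hf.birkhoffInf hT).aestronglyMeasurable ?_
  filter_upwards [hC] with x hx
  have hbdd : BddBelow (range fun n ↦ birkhoffSum T f n x) := ⟨-C, forall_mem_range.2 hx⟩
  rw [Real.norm_eq_abs, abs_le]
  exact ⟨le_birkhoffInf hx, by linarith [birkhoffInf_nonpos hbdd, hx 0, birkhoffSum_zero T f x]⟩

theorem birkhoffInf_comp_ae_eq [IsFiniteMeasure μ] (hT : MeasurePreserving T μ μ)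
    (hf : Measurable f) (hfi : Integrable f μ) (hf₀ : ∫ x, f x ∂μ = 0)
    (hC : ∀ᵐ x ∂μ, ∀ n, -C ≤ birkhoffSum T f n x) :
    birkhoffInf T f ∘ T =ᵐ[μ] birkhoffInf T f - f := by
  set g := birkhoffInf T f
  have hg : Integrable g μ := integrable_birkhoffInf hT.measurable hf hC
  have hgT : Integrable (g ∘ T) μ := hT.integrable_comp_of_integrable hg
  have hdefect_nonneg : 0 ≤ᵐ[μ] g ∘ T - g + f := by
    filter_upwards [hC] with x hx
    have := birkhoffInf_sub_le_birkhoffInf_apply (T := T) ⟨-C, forall_mem_range.2 hx⟩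
    simp only [Pi.zero_apply, Pi.add_apply, Pi.sub_apply, Function.comp_apply]
    linarith
  -- `g ∘ T - g + f` is nonnegative with integral `∫ f = 0`, since `T` preserves `μ`
  have hdefect_integral : ∫ x, (g ∘ T - g + f) x ∂μ = 0 := by
    have hgT_integral : ∫ x, (g ∘ T) x ∂μ = ∫ x, g x ∂μ := by
      have := integral_map hT.measurable.aemeasurable (hT.map_eq.symm ▸ hg.aestronglyMeasurable)
      rw [hT.map_eq] at this
      exact this.symm
    simp only [Pi.add_apply]
    rw [integral_add (hgT.sub hg) hfi]
    simp only [Pi.sub_apply]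
    rw [integral_sub hgT hg, hgT_integral, hf₀]
    ring
  filter_upwards [(integral_eq_zero_iff_of_nonneg_ae hdefect_nonneg
    ((hgT.sub hg).add hfi)).1 hdefect_integral] with x hx
  simp only [Pi.zero_apply, Pi.add_apply, Pi.sub_apply, Function.comp_apply] at hx ⊢
  linarith

theorem frequently_forall_neg_lt_birkhoffSum [IsFiniteMeasure μ] [NeZero μ]
    (hT : MeasurePreserving T μ μ) (hf : Measurable f) (hfi : Integrable f μ)
    (hf₀ : ∫ x, f x ∂μ = 0) (hC : ∀ᵐ x ∂μ, ∀ n, -C ≤ birkhoffSum T f n x) {δ : ℝ} (hδ : 0 < δ) :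
    ∃ᵐ x ∂μ, ∀ n, -δ < birkhoffSum T f n x := by
  intro hlow
  simp only [not_forall, not_lt] at hlow
  have hgood : ∀ᵐ x ∂μ, birkhoffInf T f x ≤ -δ ∧
      birkhoffInf T f (T x) = birkhoffInf T f x - f x := by
    filter_upwards [hlow, hC, birkhoffInf_comp_ae_eq hT hf hfi hf₀ hC] with x ⟨n, hn⟩ hx hxT
    exact ⟨(birkhoffInf_le ⟨-C, forall_mem_range.2 hx⟩ n).trans hn, hxT⟩
  have horbit : ∀ᵐ x ∂μ, ∀ k, birkhoffInf T f (T^[k] x) ≤ -δ ∧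
      birkhoffInf T f (T (T^[k] x)) = birkhoffInf T f (T^[k] x) - f (T^[k] x) :=
    ae_all_iff.2 fun k ↦ (hT.iterate k).quasiMeasurePreserving.tendsto_ae.eventually hgood
  obtain ⟨x, hx⟩ := horbit.exists
  have hcocycle := apply_iterate_eq_sub_birkhoffSum fun k ↦ (hx k).2
  have : birkhoffInf T f x + δ ≤ birkhoffInf T f x :=
    le_birkhoffInf fun n ↦ by linarith [hcocycle n, (hx n).1]
  linarith

end MeasurePreserving

theorem Rat.natCast_sub_mul_nonneg_of_neg_inv_den_lt {k n : ℕ} {q : ℚ}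
    (h : -(q.den : ℝ)⁻¹ < k - n * q) : 0 ≤ (k : ℝ) - n * q := by
  have hden : (0 : ℝ) < q.den := by exact_mod_cast q.pos
  have hscaled : (k : ℝ) * q.den - n * q.num = ((k - n * q) * q.den : ℝ) := by
    rw [sub_mul, mul_assoc, ← Rat.cast_natCast q.den, ← Rat.cast_mul, Rat.mul_den_eq_num]
    push_cast; ring
  have hint : (-1 : ℤ) < k * q.den - n * q.num := by
    have := mul_lt_mul_of_pos_right h hden
    rw [neg_mul, inv_mul_cancel₀ hden.ne'] at this
    exact_mod_cast hscaled ▸ this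
  have : (0 : ℝ) ≤ (k - n * q) * q.den := by
    rw [← hscaled]; exact_mod_cast (show (0 : ℤ) ≤ k * q.den - n * q.num by omega)
  exact nonneg_of_mul_nonneg_left this hden

open Classical in
theorem birkhoffSum_indicator_one {α R : Type*} [AddCommMonoidWithOne R] (T : α → α) (s : Set α)
    (n : ℕ) (x : α) : birkhoffSum T (s.indicator fun _ ↦ (1 : R)) n x =
      ((Finset.range n).filter fun k ↦ T^[k] x ∈ s).card := by
  simp [birkhoffSum, Set.indicator_apply]

theorem birkhoffSum_sub_const {α G : Type*} [AddCommGroup G] (T : α → α) (g : α → G) (c : G)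
    (n : ℕ) (x : α) : birkhoffSum T (fun y ↦ g y - c) n x = birkhoffSum T g n x - n • c := by
  simp [birkhoffSum, Finset.sum_sub_distrib]

theorem birkhoffSum_indicator_sub_nonneg_of_neg_inv_den_lt {α : Type*} {T : α → α} {s : Set α}
    {q : ℚ} {n : ℕ} {x : α}
    (h : -(q.den : ℝ)⁻¹ < birkhoffSum T (fun y ↦ s.indicator (fun _ ↦ (1 : ℝ)) y - q) n x) :
    0 ≤ birkhoffSum T (fun y ↦ s.indicator (fun _ ↦ (1 : ℝ)) y - q) n x := by
  rw [birkhoffSum_sub_const, birkhoffSum_indicator_one, nsmul_eq_mul] at h ⊢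
  exact Rat.natCast_sub_mul_nonneg_of_neg_inv_den_lt h

theorem integral_indicator_one_sub_measureReal {Ω : Type*} [MeasurableSpace Ω] {μ : Measure Ω}
    [IsProbabilityMeasure μ] {s : Set Ω} (hs : MeasurableSet s) :
    ∫ x, (s.indicator (fun _ ↦ (1 : ℝ)) x - μ.real s) ∂μ = 0 := by
  rw [integral_sub ((integrable_const 1).indicator hs) (integrable_const _),
    integral_indicator_const _ hs]
  simp

/-- If `Γ` has rational measure `α` and the Birkhoff sums of `χ_Γ` satisfy
`|S_n(ω) - nα| ≤ 1` for a.e. `ω` and all `n`, then the heavy set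
`{ω : ∀ n, S_n(ω) ≥ nα}` has positive measure. -/
theorem heavy_set_pos_measure_of_rational_bounded_sums
    {Ω : Type*} [MeasurableSpace Ω] (μ : Measure Ω) [IsProbabilityMeasure μ]
    (T : Ω → Ω) (hT : MeasurePreserving T μ μ)
    (Γ : Set Ω) (hΓ : MeasurableSet Γ)
    (hrat : ∃ q : ℚ, (μ Γ).toReal = (q : ℝ))
    (hbd : ∀ᵐ ω ∂μ, ∀ n : ℕ,
      |(∑ i ∈ Finset.range n, Γ.indicator (fun _ => (1 : ℝ)) (T^[i] ω)) -
        n * (μ Γ).toReal| ≤ 1) :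
    0 < μ {ω | ∀ n : ℕ, (n : ℝ) * (μ Γ).toReal ≤
      ∑ i ∈ Finset.range n, Γ.indicator (fun _ => (1 : ℝ)) (T^[i] ω)} := by
  obtain ⟨q, hq⟩ := hrat
  set f : Ω → ℝ := fun ω ↦ Γ.indicator (fun _ ↦ 1) ω - q
  have hS : ∀ n ω, birkhoffSum T f n ω =
      (∑ i ∈ Finset.range n, Γ.indicator (fun _ => (1 : ℝ)) (T^[i] ω)) - n * (μ Γ).toReal := by
    intro n ω
    rw [birkhoffSum_sub_const, nsmul_eq_mul, hq, birkhoffSum]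
  have hf : Measurable f := (measurable_const.indicator hΓ).sub measurable_const
  have hfi : Integrable f μ := ((integrable_const 1).indicator hΓ).sub (integrable_const _)
  have hf₀ : ∫ ω, f ω ∂μ = 0 := by
    simpa only [f, ← hq, measureReal_def] using integral_indicator_one_sub_measureReal (μ := μ) hΓ
  have hC : ∀ᵐ ω ∂μ, ∀ n, -1 ≤ birkhoffSum T f n ω := by
    filter_upwards [hbd] with ω hω n
    exact hS n ω ▸ (abs_le.1 (hω n)).1
  have hfreq := frequently_forall_neg_lt_birkhoffSum hT hf hfi hf₀ hC
    (inv_pos.2 (Nat.cast_pos.2 q.pos))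
  refine pos_iff_ne_zero.2 fun hnull ↦ frequently_ae_iff.1 hfreq (measure_mono_null ?_ hnull)
  intro ω hω n
  linarith [hS n ω ▸ birkhoffSum_indicator_sub_nonneg_of_neg_inv_den_lt (hω n)]
end
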